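/- For a nonnegative integer a with mixed-radix digits α_1, …, α_t (α_i ≤ p_i − 1) and for 1 ≤ j ≤ t−1, define the interval J̃_j = [α_{t}m_{t−1}+…+α_{j+1}m_j + (α_j+1)m_{j−1}, α_t m_{t−1}+…+α_{j+1}m_j + p_j m_{j−1} − 1]. Then J̃_j ∸ a (elementwise group subtraction of a) equals the set of integers whose digit at position j lies in [1, p_j − 1 − α_j], whose digits at positions above j are all 0, and whose digits below position j are arbitrary; in particular J̃_j ∸ a ⊆ [m_{j−1}, p_j·m_{j−1} − 1]. -/

import Mathlib

open MeasureTheory Finset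

noncomputable section

/-- Partial products: `vm p 0 = 1`, `vm p k = p 0 * p 1 * ... * p (k-1)`
(so `vm p k` is the paper's `m_k` with `p i` the paper's `p_{i+1}`). -/
def vm (p : ℕ → ℕ) : ℕ → ℕ
  | 0 => 1
  | k+1 => vm p k * p k

/-- The `i`-th mixed-radix digit of `n` (0-indexed: this is the paper's `α_{i+1}`). -/
def vdigit (p : ℕ → ℕ) (n i : ℕ) : ℕ := n / vm p i % p i

/-- Digitwise addition mod `p i` of the mixed-radix digits (the paper's `k ∔ l`). -/
def vadd (p : ℕ → ℕ) (a b : ℕ) : ℕ :=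
  ∑ i ∈ Finset.range (a + b + 1), (vdigit p a i + vdigit p b i) % p i * vm p i

/-- Digitwise negation: the inverse of `a` with respect to `vadd`. -/
def vneg (p : ℕ → ℕ) (a : ℕ) : ℕ :=
  ∑ i ∈ Finset.range (a + 1), (p i - vdigit p a i) % p i * vm p i

/-- Digitwise subtraction (the paper's `n ∸ a`). -/
def vsub (p : ℕ → ℕ) (a b : ℕ) : ℕ := vadd p a (vneg p b)

/-- The generalized Rademacher function `rad p k = r_{k+1}`:
constant on `[j/m_{k+1}, (j+1)/m_{k+1})` with value `exp(2πi (j mod p_{k+1}) / p_{k+1})`. -/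
def rad (p : ℕ → ℕ) (k : ℕ) (x : ℝ) : ℂ :=
  Complex.exp (2 * Real.pi * Complex.I *
    ((⌊x * (vm p (k+1) : ℝ)⌋ % (p k : ℤ) : ℤ) : ℂ) / (p k : ℂ))

/-- The Vilenkin function `w_n = ∏ r_{i+1}^{α_{i+1}}` where `α` are the digits of `n`. -/
def vw (p : ℕ → ℕ) (n : ℕ) (x : ℝ) : ℂ :=
  ∏ i ∈ Finset.range (n + 1), rad p i x ^ vdigit p n i

/-- The Vilenkin–Fourier coefficient `(f, w_n)`. -/
def vip (p : ℕ → ℕ) (f : ℝ → ℂ) (n : ℕ) : ℂ :=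
  ∫ x in Set.Ico (0:ℝ) 1, f x * (starRingEnd ℂ) (vw p n x)

/-- `E_k f = ∑_{n < m_k} (f, w_n) w_n`. -/
def vE (p : ℕ → ℕ) (k : ℕ) (f : ℝ → ℂ) (x : ℝ) : ℂ :=
  ∑ n ∈ Finset.range (vm p k), vip p f n * vw p n x

/-- The martingale difference `Δ_k f = E_k f - E_{k-1} f` (for `k ≥ 1`). -/
def vD (p : ℕ → ℕ) (k : ℕ) (f : ℝ → ℂ) (x : ℝ) : ℂ :=
  vE p k f x - vE p (k-1) f x

/-- The block projection `Δ_{k,l} f = ∑_{n = l·m_{k-1}}^{(l+1)m_{k-1}-1} (f, w_n) w_n`. -/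
def vDkl (p : ℕ → ℕ) (k l : ℕ) (f : ℝ → ℂ) (x : ℝ) : ℂ :=
  ∑ n ∈ Finset.Ico (l * vm p (k-1)) ((l+1) * vm p (k-1)), vip p f n * vw p n x

/-- The martingale square function `S f = (|Δ_0 f|² + ∑_{k≥1} |Δ_k f|²)^{1/2}`. -/
def vS (p : ℕ → ℕ) (f : ℝ → ℂ) (x : ℝ) : ℝ :=
  Real.sqrt (‖vE p 0 f x‖^2 + ∑' k : ℕ, ‖vD p (k+1) f x‖^2)

/-- The Vilenkin square function
`S̃ f = (|Δ_0 f|² + ∑_{k≥1} ∑_{l=1}^{p_k-1} |Δ_{k,l} f|²)^{1/2}`. -/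
def vtS (p : ℕ → ℕ) (f : ℝ → ℂ) (x : ℝ) : ℝ :=
  Real.sqrt (‖vE p 0 f x‖^2 + ∑' k : ℕ, ∑ l ∈ Finset.Ico 1 (p k), ‖vDkl p (k+1) l f x‖^2)

/-! A point `n` of the block `J̃_j` agrees with `a` in every digit above position `j - 1` and
has a larger digit at position `j - 1`; this is just the division of `n` by `m_j` and `m_{j-1}`.
Since `∸` acts digitwise, `n ∸ a` then has zero digits above `j - 1`, and at `j - 1` the
difference of the two digits, with no wrap-around. Conversely every such `b` is hit by
`n = a ∔ b`, since `(a ∔ b) ∸ a = b` and adding the digits of `b` to those of `a` again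
involves no wrap-around. -/

section Digits

variable {p : ℕ → ℕ}

theorem vm_succ (k : ℕ) : vm p (k + 1) = vm p k * p k := rfl

theorem vm_pos (hp : ∀ i, 2 ≤ p i) (k : ℕ) : 0 < vm p k := by
  induction k with
  | zero => exact Nat.one_pos
  | succ k ih => exact Nat.mul_pos ih (by linarith [hp k])

theorem vm_dvd_vm {k l : ℕ} (h : k ≤ l) : vm p k ∣ vm p l := by
  induction l, h using Nat.le_induction with
  | base => rfl
  | succ l _ ih => exact ih.mul_right (p l)

theorem two_pow_le_vm (hp : ∀ i, 2 ≤ p i) (k : ℕ) : 2 ^ k ≤ vm p k := by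
  induction k with
  | zero => rfl
  | succ k ih => rw [pow_succ, vm_succ]; exact Nat.mul_le_mul ih (hp k)

theorem lt_vm_of_lt (hp : ∀ i, 2 ≤ p i) {n k : ℕ} (h : n < k) : n < vm p k :=
  calc n < 2 ^ n := Nat.lt_two_pow_self
    _ ≤ 2 ^ k := Nat.pow_le_pow_right two_pos h.le
    _ ≤ vm p k := two_pow_le_vm hp k

theorem vdigit_lt (hp : ∀ i, 2 ≤ p i) (n i : ℕ) : vdigit p n i < p i :=
  Nat.mod_lt _ (by linarith [hp i])

theorem vdigit_eq_zero_of_lt_vm {n i : ℕ} (h : n < vm p i) : vdigit p n i = 0 := by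
  rw [vdigit, Nat.div_eq_of_lt h, Nat.zero_mod]

theorem vm_le_of_vdigit_pos {n i : ℕ} (h : 0 < vdigit p n i) : vm p i ≤ n := by
  by_contra! hn
  exact h.ne' (vdigit_eq_zero_of_lt_vm hn)

theorem mod_vm_eq_sum (n K : ℕ) : n % vm p K = ∑ i ∈ range K, vdigit p n i * vm p i := by
  induction K with
  | zero => simp [vm, Nat.mod_one]
  | succ K ih =>
    rw [sum_range_succ, ← ih, vm_succ, Nat.mod_mul, vdigit]
    ring

theorem vm_mul_div_vm_eq_sum_Ico {n K k : ℕ} (hn : n < vm p K) (hk : k ≤ K) :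
    vm p k * (n / vm p k) = ∑ i ∈ Ico k K, vdigit p n i * vm p i := by
  have hlow := mod_vm_eq_sum (p := p) n k
  have hall := mod_vm_eq_sum (p := p) n K
  rw [Nat.mod_eq_of_lt hn, range_eq_Ico, ← sum_Ico_consecutive _ (Nat.zero_le k) hk,
    ← range_eq_Ico] at hall
  have := Nat.div_add_mod n (vm p k)
  omega

theorem div_vm_eq_of_vdigit_eq (hp : ∀ i, 2 ≤ p i) {n a k : ℕ}
    (h : ∀ i, k ≤ i → vdigit p n i = vdigit p a i) : n / vm p k = a / vm p k := by
  have hK : k ≤ n + a + k + 1 := by omega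
  have hsum := vm_mul_div_vm_eq_sum_Ico (lt_vm_of_lt hp (by omega : n < n + a + k + 1)) hK
  rw [sum_congr rfl fun i hi => by rw [h i (mem_Ico.1 hi).1],
    ← vm_mul_div_vm_eq_sum_Ico (lt_vm_of_lt hp (by omega : a < n + a + k + 1)) hK] at hsum
  exact Nat.eq_of_mul_eq_mul_left (vm_pos hp k) hsum

theorem eq_of_vdigit_eq (hp : ∀ i, 2 ≤ p i) {n a : ℕ} (h : ∀ i, vdigit p n i = vdigit p a i) :
    n = a := by
  simpa [vm] using div_vm_eq_of_vdigit_eq hp (k := 0) fun i _ => h i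

theorem lt_vm_of_vdigit_eq_zero (hp : ∀ i, 2 ≤ p i) {n k : ℕ}
    (h : ∀ i, k ≤ i → vdigit p n i = 0) : n < vm p k := by
  have h0 : n / vm p k = 0 / vm p k := div_vm_eq_of_vdigit_eq (a := 0) hp fun i hi => by
    rw [h i hi, vdigit, Nat.zero_div, Nat.zero_mod]
  rwa [Nat.zero_div, Nat.div_eq_zero_iff_lt (vm_pos hp k)] at h0

theorem vdigit_eq_of_div_vm_eq {n a k i : ℕ} (h : n / vm p k = a / vm p k) (hi : k ≤ i) :
    vdigit p n i = vdigit p a i := by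
  obtain ⟨c, hc⟩ := vm_dvd_vm (p := p) hi
  rw [vdigit, vdigit, hc, ← Nat.div_div_eq_div_mul, ← Nat.div_div_eq_div_mul, h]

theorem sum_range_mul_vm_lt (hp : ∀ i, 2 ≤ p i) {d : ℕ → ℕ} (hd : ∀ i, d i < p i) (K : ℕ) :
    ∑ i ∈ range K, d i * vm p i < vm p K := by
  induction K with
  | zero => simp [vm]
  | succ K ih =>
    rw [sum_range_succ, vm_succ]
    have hdK : d K * vm p K ≤ (p K - 1) * vm p K := Nat.mul_le_mul_right _ (by have := hd K; omega)
    have hpK : vm p K * p K = vm p K + (p K - 1) * vm p K := by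
      rw [Nat.sub_mul, one_mul, Nat.mul_comm,
        Nat.add_sub_cancel' (Nat.le_mul_of_pos_left _ (by linarith [hp K]))]
    omega

theorem vdigit_sum_range (hp : ∀ i, 2 ≤ p i) {d : ℕ → ℕ} (hd : ∀ i, d i < p i) {K : ℕ}
    (hK : ∀ i, K ≤ i → d i = 0) (i : ℕ) :
    vdigit p (∑ l ∈ range K, d l * vm p l) i = d i := by
  rcases le_or_gt K i with hi | hi
  · rw [hK i hi, vdigit_eq_zero_of_lt_vm]
    exact (sum_range_mul_vm_lt hp hd K).trans_le (Nat.le_of_dvd (vm_pos hp i) (vm_dvd_vm hi))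
  have hsplit : ∑ l ∈ range K, d l * vm p l = ∑ l ∈ range i, d l * vm p l + d i * vm p i
      + ∑ l ∈ Ico (i + 1) K, d l * vm p l := by
    rw [← sum_range_succ, range_eq_Ico, range_eq_Ico, sum_Ico_consecutive _ (Nat.zero_le _) hi]
  obtain ⟨c, hc⟩ : vm p (i + 1) ∣ ∑ l ∈ Ico (i + 1) K, d l * vm p l :=
    dvd_sum fun l hl => (vm_dvd_vm (mem_Ico.1 hl).1).mul_left _
  rw [hsplit, hc, vm_succ, vdigit,
    show ∑ l ∈ range i, d l * vm p l + d i * vm p i + vm p i * p i * c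
      = ∑ l ∈ range i, d l * vm p l + vm p i * (d i + p i * c) by ring,
    Nat.add_mul_div_left _ _ (vm_pos hp i), Nat.div_eq_of_lt (sum_range_mul_vm_lt hp hd i),
    zero_add, Nat.add_mul_mod_self_left, Nat.mod_eq_of_lt (hd i)]

theorem vdigit_vadd (hp : ∀ i, 2 ≤ p i) (a b i : ℕ) :
    vdigit p (vadd p a b) i = (vdigit p a i + vdigit p b i) % p i := by
  refine vdigit_sum_range hp (fun l => Nat.mod_lt _ (by linarith [hp l])) (fun l hl => ?_) i
  rw [vdigit_eq_zero_of_lt_vm (lt_vm_of_lt hp (by omega)),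
    vdigit_eq_zero_of_lt_vm (lt_vm_of_lt hp (by omega)), Nat.zero_mod]

theorem vdigit_vneg (hp : ∀ i, 2 ≤ p i) (a i : ℕ) :
    vdigit p (vneg p a) i = (p i - vdigit p a i) % p i := by
  refine vdigit_sum_range hp (fun l => Nat.mod_lt _ (by linarith [hp l])) (fun l hl => ?_) i
  rw [vdigit_eq_zero_of_lt_vm (lt_vm_of_lt hp (by omega)), Nat.sub_zero, Nat.mod_self]

theorem vdigit_vsub (hp : ∀ i, 2 ≤ p i) (n a i : ℕ) :
    vdigit p (vsub p n a) i = (vdigit p n i + (p i - vdigit p a i)) % p i := by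
  rw [vsub, vdigit_vadd hp, vdigit_vneg hp, Nat.add_mod_mod]

theorem vdigit_vadd_of_lt (hp : ∀ i, 2 ≤ p i) {a b i : ℕ}
    (h : vdigit p a i + vdigit p b i < p i) :
    vdigit p (vadd p a b) i = vdigit p a i + vdigit p b i := by
  rw [vdigit_vadd hp, Nat.mod_eq_of_lt h]

theorem vdigit_vsub_of_le (hp : ∀ i, 2 ≤ p i) {n a i : ℕ} (h : vdigit p a i ≤ vdigit p n i) :
    vdigit p (vsub p n a) i = vdigit p n i - vdigit p a i := by
  have hn := vdigit_lt hp n i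
  have ha := vdigit_lt hp a i
  rw [vdigit_vsub hp, show vdigit p n i + (p i - vdigit p a i)
    = vdigit p n i - vdigit p a i + p i by omega, Nat.add_mod_right, Nat.mod_eq_of_lt (by omega)]

theorem vsub_vadd_cancel_left (hp : ∀ i, 2 ≤ p i) (a b : ℕ) : vsub p (vadd p a b) a = b := by
  refine eq_of_vdigit_eq hp fun i => ?_
  have ha := vdigit_lt hp a i
  have hb := vdigit_lt hp b i
  rw [vdigit_vsub hp, vdigit_vadd hp, Nat.mod_add_mod, show vdigit p a i + vdigit p b i
    + (p i - vdigit p a i) = vdigit p b i + p i by omega, Nat.add_mod_right, Nat.mod_eq_of_lt hb]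

theorem mem_Ico_iff_div_eq_and_lt_mod {m P q c n : ℕ} (hm : 0 < m) (hP : 0 < P) :
    n ∈ Ico (m * P * q + (c + 1) * m) (m * P * q + m * P) ↔ n / (m * P) = q ∧ c < n / m % P := by
  rw [mem_Ico, ← Nat.div_div_eq_div_mul,
    show m * P * q + (c + 1) * m = (P * q + c + 1) * m by ring, ← Nat.le_div_iff_mul_le hm,
    show m * P * q + m * P = (P * q + P) * m by ring, ← Nat.div_lt_iff_lt_mul hm]
  have hdm := Nat.div_add_mod (n / m) P
  have hlt := Nat.mod_lt (n / m) hP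
  constructor
  · rintro ⟨hlo, hhi⟩
    have hq : n / m / P = q := Nat.div_eq_of_lt_le (by linarith) (by linarith)
    rw [hq] at hdm
    exact ⟨hq, by omega⟩
  · rintro ⟨hq, hc⟩
    rw [hq] at hdm
    omega

/-- The left side is the paper's block `J̃_j`, with `k = j - 1`. -/
theorem mem_block_iff (hp : ∀ i, 2 ≤ p i) {a k n : ℕ} :
    n ∈ Ico (vm p (k + 1) * (a / vm p (k + 1)) + (vdigit p a k + 1) * vm p k)
        (vm p (k + 1) * (a / vm p (k + 1)) + vm p (k + 1)) ↔
      (∀ i, k + 1 ≤ i → vdigit p n i = vdigit p a i) ∧ vdigit p a k < vdigit p n k := by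
  rw [vm_succ, mem_Ico_iff_div_eq_and_lt_mod (vm_pos hp k) (by linarith [hp k]), ← vm_succ]
  exact and_congr ⟨fun h _ hi => vdigit_eq_of_div_vm_eq h hi, div_vm_eq_of_vdigit_eq hp⟩
    Iff.rfl

theorem coe_image_vsub_block (hp : ∀ i, 2 ≤ p i) (a k : ℕ) :
    (((Ico (vm p (k + 1) * (a / vm p (k + 1)) + (vdigit p a k + 1) * vm p k)
        (vm p (k + 1) * (a / vm p (k + 1)) + vm p (k + 1))).image (fun n => vsub p n a)) : Set ℕ)
      = {n : ℕ | 1 ≤ vdigit p n k ∧ vdigit p n k ≤ p k - 1 - vdigit p a k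
          ∧ ∀ i, k + 1 ≤ i → vdigit p n i = 0} := by
  ext b
  simp only [coe_image, Set.mem_image, mem_coe, Set.mem_ofPred_eq, mem_block_iff hp]
  constructor
  · rintro ⟨n, ⟨hhigh, hk⟩, rfl⟩
    have hnk := vdigit_lt hp n k
    rw [vdigit_vsub_of_le hp hk.le]
    refine ⟨by omega, by omega, fun i hi => ?_⟩
    rw [vdigit_vsub_of_le hp (hhigh i hi).ge, hhigh i hi, Nat.sub_self]
  · rintro ⟨hpos, hle, hhigh⟩
    have hak := vdigit_lt hp a k
    refine ⟨vadd p a b, ⟨fun i hi => ?_, ?_⟩, vsub_vadd_cancel_left hp a b⟩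
    · rw [vdigit_vadd_of_lt hp (by rw [hhigh i hi, add_zero]; exact vdigit_lt hp a i), hhigh i hi,
        add_zero]
    · rw [vdigit_vadd_of_lt hp (by omega)]
      omega

end Digits

theorem stmt_18_general (p : ℕ → ℕ) (hp : ∀ i, 2 ≤ p i) (a j : ℕ) (hj1 : 1 ≤ j) :
    ((((Finset.Ico (vm p j * (a / vm p j) + (vdigit p a (j-1) + 1) * vm p (j-1))
          (vm p j * (a / vm p j) + vm p j)).image (fun n => vsub p n a)) : Set ℕ)
        = {n : ℕ | 1 ≤ vdigit p n (j-1)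
            ∧ vdigit p n (j-1) ≤ p (j-1) - 1 - vdigit p a (j-1)
            ∧ ∀ i, j ≤ i → vdigit p n i = 0}) ∧
    ((Finset.Ico (vm p j * (a / vm p j) + (vdigit p a (j-1) + 1) * vm p (j-1))
          (vm p j * (a / vm p j) + vm p j)).image (fun n => vsub p n a))
        ⊆ Finset.Ico (vm p (j-1)) (p (j-1) * vm p (j-1)) := by
  obtain ⟨k, rfl⟩ : ∃ k, j = k + 1 := ⟨j - 1, by omega⟩
  simp only [Nat.add_sub_cancel]
  have himage := coe_image_vsub_block hp a k
  refine ⟨himage, fun b hb => ?_⟩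
  rw [← mem_coe, himage] at hb
  obtain ⟨hpos, -, hhigh⟩ := hb
  rw [mem_Ico, mul_comm, ← vm_succ]
  exact ⟨vm_le_of_vdigit_pos hpos, lt_vm_of_vdigit_eq_zero hp hhigh⟩

/-- for `1 ≤ j ≤ t-1` (with `a < m_t`), the translated block
`J̃_j ∸ a` is exactly the set of integers whose digit at position `j` lies in
`[1, p_j - 1 - α_j]`, whose digits above `j` vanish, and whose lower digits are
arbitrary; in particular it is contained in `[m_{j-1}, p_j m_{j-1} - 1]`. -/
theorem stmt_18 (p : ℕ → ℕ) (hp : ∀ i, 2 ≤ p i) (a t j : ℕ)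
    (ha : a < vm p t) (hj1 : 1 ≤ j) (hj2 : j + 1 ≤ t) :
    ((((Finset.Ico (vm p j * (a / vm p j) + (vdigit p a (j-1) + 1) * vm p (j-1))
          (vm p j * (a / vm p j) + vm p j)).image (fun n => vsub p n a)) : Set ℕ)
        = {n : ℕ | 1 ≤ vdigit p n (j-1)
            ∧ vdigit p n (j-1) ≤ p (j-1) - 1 - vdigit p a (j-1)
            ∧ ∀ i, j ≤ i → vdigit p n i = 0}) ∧
    ((Finset.Ico (vm p j * (a / vm p j) + (vdigit p a (j-1) + 1) * vm p (j-1))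
          (vm p j * (a / vm p j) + vm p j)).image (fun n => vsub p n a))
        ⊆ Finset.Ico (vm p (j-1)) (p (j-1) * vm p (j-1)) :=
  stmt_18_general p hp a j hj1
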